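/- For every positive integer n and nonnegative integer k, (ζ_{n-1}(1_{k-1})/n) + ∑_{i+j=n, i,j≥1} (ζ_{i-1}(1_{k-1})/i) · (C(2j,j)/4^j) = (2^k/4^n)·C(2n,n)·tₙ(1_k), where tₙ(1_k) = ∑_{n ≥ n₁ > ⋯ > n_k ≥ 1} ∏_{j=1}^k 1/(2n_j - 1). -/

import Mathlib

open Finset

/-- Multiple harmonic sum with `r` ones: `ζₙ(1_r) = ∑_{n ≥ n₁ > ⋯ > n_r ≥ 1} 1/(n₁⋯n_r)`. -/
noncomputable def zeta1 : ℕ → ℕ → ℝ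
  | 0, _ => 1
  | (r+1), n => ∑ j ∈ Finset.Icc 1 n, (1 / (j : ℝ)) * zeta1 r (j - 1)

/-- Multiple t-harmonic sum with `k` ones: `tₙ(1_k) = ∑_{n ≥ n₁ > ⋯ > n_k ≥ 1} ∏ 1/(2n_j-1)`. -/
noncomputable def tharm : ℕ → ℕ → ℝ
  | 0, _ => 1
  | (k+1), n => ∑ j ∈ Finset.Icc 1 n, (1 / (2 * (j : ℝ) - 1)) * tharm k (j - 1)

/-!
Pass to generating functions. Put `Aₖ = ∑ ζₙ₋₁(1ₖ₋₁) Xⁿ / n` (with `A₀ = 1`) and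
`C = ∑ C(2n,n) Xⁿ / 4ⁿ = (1 - X)^(-1/2)`, so that the left-hand side is the `n`-th coefficient of
`Aₖ C`. Since `(1 - X) Aₖ₊₁' = Aₖ` and `(1 - X) C' = C / 2`, the Leibniz rule gives
`(1 - X) (Aₖ₊₁ C)' = Aₖ C + Aₖ₊₁ C / 2`. The series `Tₖ = ∑ 2ᵏ C(2n,n) tₙ(1ₖ) Xⁿ / 4ⁿ` obeys the
same recursion because `tₙ₊₁(1ₖ₊₁) = tₙ(1ₖ₊₁) + tₙ(1ₖ) / (2n + 1)`, and a solution of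
`(1 - X) F' = F / 2` with `F(0) = 0` vanishes, so `Aₖ C = Tₖ` by induction on `k`.
-/

open PowerSeries

namespace PowerSeries

theorem coeff_one_sub_X_mul_derivative {R : Type*} [CommRing R] (f : R⟦X⟧) (n : ℕ) :
    coeff n ((1 - X) * d⁄dX R f) = (n + 1) * coeff (n + 1) f - n * coeff n f := by
  rcases n with _ | n
  · rw [sub_mul, one_mul, map_sub, coeff_zero_X_mul, coeff_derivative]
    simp
  · simp [sub_mul, coeff_derivative, coeff_succ_X_mul, mul_comm]

theorem eq_zero_of_one_sub_X_mul_derivative_eq_smul {K : Type*} [Field K] [CharZero K]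
    {f : K⟦X⟧} {a : K} (hf : (1 - X) * d⁄dX K f = a • f) (h₀ : constantCoeff f = 0) :
    f = 0 := by
  ext n
  induction n with
  | zero => simpa using h₀
  | succ n ih =>
    have h := congrArg (coeff n) hf
    rw [coeff_one_sub_X_mul_derivative, coeff_smul, ih] at h
    simpa [Nat.cast_add_one_ne_zero] using h

end PowerSeries

theorem zeta1_succ_succ (r n : ℕ) :
    zeta1 (r + 1) (n + 1) = zeta1 (r + 1) n + zeta1 r n / (n + 1) := by
  rw [zeta1, zeta1, sum_Icc_succ_top (by omega)]
  push_cast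
  ring

theorem tharm_succ_succ (k n : ℕ) :
    tharm (k + 1) (n + 1) = tharm (k + 1) n + tharm k n / (2 * n + 1) := by
  rw [tharm, tharm, sum_Icc_succ_top (by omega)]
  push_cast
  ring

noncomputable def centralBinomSeries : ℝ⟦X⟧ := mk fun n => (Nat.choose (2 * n) n : ℝ) / 4 ^ n

theorem coeff_succ_centralBinomSeries (n : ℕ) :
    ((n : ℝ) + 1) * coeff (n + 1) centralBinomSeries = (n + 2⁻¹) * coeff n centralBinomSeries := by
  have h : ((n + 1 : ℕ) : ℝ) * Nat.centralBinom (n + 1) = 2 * (2 * n + 1) * Nat.centralBinom n := by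
    exact_mod_cast Nat.succ_mul_centralBinom_succ n
  simp only [centralBinomSeries, coeff_mk, ← Nat.centralBinom_eq_two_mul_choose]
  push_cast at h
  linear_combination h / 4 ^ (n + 1)

theorem one_sub_X_mul_derivative_centralBinomSeries :
    (1 - X) * d⁄dX ℝ centralBinomSeries = (2⁻¹ : ℝ) • centralBinomSeries := by
  ext n
  rw [coeff_one_sub_X_mul_derivative, coeff_succ_centralBinomSeries, coeff_smul, smul_eq_mul]
  ring

/-- `(-log (1 - X))ᵏ / k!`; the constant coefficient of `zetaSeries (k + 1)` is `0` because
`x / 0 = 0`. -/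
noncomputable def zetaSeries : ℕ → ℝ⟦X⟧
  | 0 => 1
  | k + 1 => mk fun n => zeta1 k (n - 1) / n

theorem derivative_zetaSeries_succ (k : ℕ) : d⁄dX ℝ (zetaSeries (k + 1)) = mk (zeta1 k) := by
  ext n
  rw [coeff_derivative, zetaSeries, coeff_mk, coeff_mk]
  push_cast
  field_simp

theorem one_sub_X_mul_derivative_zetaSeries (k : ℕ) :
    (1 - X) * d⁄dX ℝ (zetaSeries (k + 1)) = zetaSeries k := by
  ext n
  rw [derivative_zetaSeries_succ, sub_mul, one_mul, map_sub]
  rcases k with _ | r <;> rcases n with _ | n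
  · simp [zetaSeries, zeta1]
  · simp [zetaSeries, coeff_succ_X_mul, zeta1]
  · simp [zetaSeries, zeta1]
  · simp only [coeff_succ_X_mul, coeff_mk, zetaSeries, zeta1_succ_succ, Nat.add_sub_cancel]
    push_cast
    ring

noncomputable def tharmSeries (k : ℕ) : ℝ⟦X⟧ :=
  mk fun n => 2 ^ k * coeff n centralBinomSeries * tharm k n

theorem one_sub_X_mul_derivative_tharmSeries (k : ℕ) :
    (1 - X) * d⁄dX ℝ (tharmSeries (k + 1)) = tharmSeries k + (2⁻¹ : ℝ) • tharmSeries (k + 1) := by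
  ext n
  have hc := coeff_succ_centralBinomSeries n
  have hn : (2 * n + 1 : ℝ) ≠ 0 := by positivity
  rw [coeff_one_sub_X_mul_derivative]
  simp only [tharmSeries, map_add, coeff_smul, coeff_mk, smul_eq_mul, tharm_succ_succ]
  linear_combination (2 : ℝ) ^ (k + 1) * (tharm (k + 1) n + tharm k n / (2 * n + 1)) * hc
    + 2 ^ k * coeff n centralBinomSeries * tharm k n * mul_inv_cancel₀ hn

theorem zetaSeries_mul_centralBinomSeries (k : ℕ) :
    zetaSeries k * centralBinomSeries = tharmSeries k := by
  induction k with
  | zero => ext n; simp [zetaSeries, tharmSeries, tharm]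
  | succ k ih =>
    rw [← sub_eq_zero]
    refine eq_zero_of_one_sub_X_mul_derivative_eq_smul (a := 2⁻¹) ?_ ?_
    · rw [map_sub, Derivation.leibniz, mul_sub, one_sub_X_mul_derivative_tharmSeries, smul_sub,
        ← ih]
      have hC := one_sub_X_mul_derivative_centralBinomSeries
      simp only [smul_eq_mul, smul_eq_C_mul] at hC ⊢
      linear_combination
        zetaSeries (k + 1) * hC + centralBinomSeries * one_sub_X_mul_derivative_zetaSeries k
    · rw [← coeff_zero_eq_constantCoeff_apply]
      simp [zetaSeries, tharmSeries, tharm]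

theorem coeff_zetaSeries_succ_mul_centralBinomSeries (k n : ℕ) :
    coeff n (zetaSeries (k + 1) * centralBinomSeries) =
      zeta1 k (n - 1) / n + ∑ i ∈ Icc 1 (n - 1), zeta1 k (i - 1) / i *
        ((Nat.choose (2 * (n - i)) (n - i) : ℝ) / 4 ^ (n - i)) := by
  rw [coeff_mul, Nat.sum_antidiagonal_eq_sum_range_succ (fun i j ↦ coeff i _ * coeff j _)]
  rcases n with _ | m
  · simp [zetaSeries]
  · rw [sum_range_succ, sum_range_eq_add_Ico _ m.add_one_pos, Ico_add_one_right_eq_Icc]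
    simp only [zetaSeries, centralBinomSeries, coeff_mk, Nat.cast_zero, div_zero, zero_mul,
      zero_add, Nat.add_sub_cancel, Nat.sub_self, mul_zero, Nat.choose_zero_right, pow_zero,
      div_one, mul_one, Nat.cast_succ]
    ring

theorem cauchy_product_tharm_general (n k : ℕ) :
    (if k = 0 then (Nat.choose (2 * n) n : ℝ) / 4 ^ n
     else zeta1 (k - 1) (n - 1) / n +
       ∑ i ∈ Finset.Icc 1 (n - 1), zeta1 (k - 1) (i - 1) / i *
         ((Nat.choose (2 * (n - i)) (n - i) : ℝ) / 4 ^ (n - i)))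
      = 2 ^ k / 4 ^ n * (Nat.choose (2 * n) n : ℝ) * tharm k n := by
  rcases k with _ | k
  · simp only [if_pos, tharm, pow_zero, mul_one]
    ring
  · rw [if_neg k.succ_ne_zero, Nat.add_sub_cancel, ← coeff_zetaSeries_succ_mul_centralBinomSeries,
      zetaSeries_mul_centralBinomSeries, tharmSeries, coeff_mk, centralBinomSeries, coeff_mk]
    ring

theorem cauchy_product_tharm (n k : ℕ) (hn : 1 ≤ n) :
    (if k = 0 then (Nat.choose (2 * n) n : ℝ) / 4 ^ n
     else zeta1 (k - 1) (n - 1) / n +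
       ∑ i ∈ Finset.Icc 1 (n - 1), zeta1 (k - 1) (i - 1) / i *
         ((Nat.choose (2 * (n - i)) (n - i) : ℝ) / 4 ^ (n - i)))
      = 2 ^ k / 4 ^ n * (Nat.choose (2 * n) n : ℝ) * tharm k n :=
  cauchy_product_tharm_general n k
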